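/- arXiv:1209.5569 — 3 statements merged into one kernel-verified Lean document; each statement's English description precedes it below -/
import Mathlib

section
/- Let C be a covering of a finite nonempty set U. For every family S of subsets with S ⊆ P, both ⋃S ∈ P and ⋂S ∈ P; consequently (P, ⊆) is a complete lattice. -/
open Set

variable {U : Type*}

/-- The neighborhood of `x` w.r.t. the covering `C`: the intersection of all
blocks of `C` containing `x`. -/
def nbhd (C : Set (Set U)) (x : U) : Set U := ⋂₀ {K | K ∈ C ∧ x ∈ K}

/-- The sixth-type lower approximation. -/
def xL (C : Set (Set U)) (X : Set U) : Set U := {x | nbhd C x ⊆ X}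

/-- The fixed point set of neighborhoods. -/
def pFix (C : Set (Set U)) : Set (Set U) := {X | xL C X = X}

section

variable (C : Set (Set U))

theorem mem_nbhd_self (x : U) : x ∈ nbhd C x :=
  mem_sInter.2 fun _ hK => hK.2

theorem xL_subset (X : Set U) : xL C X ⊆ X :=
  fun x hx => hx (mem_nbhd_self C x)

theorem mem_pFix_iff {X : Set U} : X ∈ pFix C ↔ ∀ x ∈ X, nbhd C x ⊆ X :=
  ⟨fun h x hx => (h.symm ▸ hx : x ∈ xL C X),
    fun h => (xL_subset C X).antisymm h⟩

variable {C} {S : Set (Set U)}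

theorem sUnion_mem_pFix (hS : S ⊆ pFix C) : ⋃₀ S ∈ pFix C := by
  rw [mem_pFix_iff]
  rintro x ⟨X, hX, hxX⟩
  exact ((mem_pFix_iff C).1 (hS hX) x hxX).trans (subset_sUnion_of_mem hX)

theorem sInter_mem_pFix (hS : S ⊆ pFix C) : ⋂₀ S ∈ pFix C := by
  rw [mem_pFix_iff]
  intro x hx
  exact subset_sInter fun X hX => (mem_pFix_iff C).1 (hS hX) x (hx X hX)

end

theorem stmt4_general (C : Set (Set U))
    (S : Set (Set U)) (hS : S ⊆ pFix C) :
    ⋃₀ S ∈ pFix C ∧ ⋂₀ S ∈ pFix C :=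
  ⟨sUnion_mem_pFix hS, sInter_mem_pFix hS⟩

/-- `P` is closed under arbitrary unions and intersections
(the empty intersection being `U`), hence `(P, ⊆)` is a complete lattice. -/
theorem stmt4 [Fintype U] [Nonempty U] (C : Set (Set U))
    (hne : ∀ K ∈ C, K.Nonempty) (hcov : ⋃₀ C = Set.univ)
    (S : Set (Set U)) (hS : S ⊆ pFix C) :
    ⋃₀ S ∈ pFix C ∧ ⋂₀ S ∈ pFix C :=
  stmt4_general C S hS
end

section
/- Let C be a unary covering of a finite nonempty set U. Then for all X, Y, Z ∈ F one has FL(X ∩ (Y ∪ Z)) = FL(X ∩ Y) ∪ FL(X ∩ Z); consequently the lattice (F, ⊆), with join X ∨ Y = X ∪ Y and meet X ∧ Y = FL(X ∩ Y), is distributive. -/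
/-! For a finite unary covering, write `M x` for the unique minimal description of `x`; it is
the least member of `C` containing `x`. Hence `x ∈ FL(A)` iff `M x ⊆ A`, and for a fixed point
`X`, `x ∈ X` iff `M x ⊆ X`. A point of `FL(X ∩ (Y ∪ Z))` lies in `X` and in `Y` or `Z`, so
`M x ⊆ X ∩ Y` or `M x ⊆ X ∩ Z`. -/

open Set

variable {U : Type*}

/-- The first-type lower approximation w.r.t. the covering `C`. -/
def fL (C : Set (Set U)) (X : Set U) : Set U := ⋃₀ {K | K ∈ C ∧ K ⊆ X}

/-- The fixed point set of covering. -/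
def fFix (C : Set (Set U)) : Set (Set U) := {X | fL C X = X}

/-- `K` is reducible in `C` if it is a union of some sets in `C \ {K}`. -/
def covReducible (C : Set (Set U)) (K : Set U) : Prop := ∃ S ⊆ C \ {K}, K = ⋃₀ S

/-- The minimal description of `x`. -/
def md (C : Set (Set U)) (x : U) : Set (Set U) :=
  {K | K ∈ C ∧ x ∈ K ∧ ∀ S ∈ C, x ∈ S → S ⊆ K → S = K}

/-- `C` is unary if `|md x| = 1` for every `x`. -/
def isUnary (C : Set (Set U)) : Prop := ∀ x : U, ∃! K : Set U, K ∈ md C x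

/-- The join-irreducible elements of the lattice `(fFix C, ⊆)`. -/
def jIrr (C : Set (Set U)) : Set (Set U) :=
  {A | A ∈ fFix C ∧ ∀ X ∈ fFix C, ∀ Y ∈ fFix C, A = X ∪ Y → A = X ∨ A = Y}

lemma mem_fL_iff {C : Set (Set U)} {X : Set U} {x : U} :
    x ∈ fL C X ↔ ∃ K ∈ C, K ⊆ X ∧ x ∈ K := by
  simp [fL, and_assoc]

lemma fL_subset (C : Set (Set U)) (X : Set U) : fL C X ⊆ X :=
  sUnion_subset fun _ hK => hK.2

lemma fL_mono (C : Set (Set U)) {X Y : Set U} (h : X ⊆ Y) : fL C X ⊆ fL C Y :=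
  sUnion_subset_sUnion fun _ hK => ⟨hK.1, hK.2.trans h⟩

lemma mem_md_iff_minimal {C : Set (Set U)} {x : U} {K : Set U} :
    K ∈ md C x ↔ Minimal (· ∈ {S ∈ C | x ∈ S}) K :=
  ⟨fun ⟨hK, hxK, hmin⟩ => ⟨⟨hK, hxK⟩, fun ⦃S⦄ ⟨hS, hxS⟩ hSK => (hmin S hS hxS hSK).ge⟩,
    fun ⟨⟨hK, hxK⟩, hmin⟩ => ⟨hK, hxK, fun _ hS hxS hSK => hSK.antisymm (hmin ⟨hS, hxS⟩ hSK)⟩⟩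

/-- Any member containing `x` lies above a minimal one, which by unarity is `M`. -/
lemma md_subset_of_mem {C : Set (Set U)} (hC : C.Finite) (hunary : isUnary C) {x : U}
    {M K : Set U} (hM : M ∈ md C x) (hK : K ∈ C) (hxK : x ∈ K) : M ⊆ K := by
  obtain ⟨M', -, huniq⟩ := hunary x
  obtain ⟨N, hNK, hN⟩ :=
    (hC.subset (sep_subset C (x ∈ ·))).isPWO.exists_le_minimal ⟨hK, hxK⟩
  rwa [huniq M hM, ← huniq N (mem_md_iff_minimal.2 hN)]

lemma mem_fL_iff_md_subset {C : Set (Set U)} (hC : C.Finite) (hunary : isUnary C) {x : U}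
    {M : Set U} (hM : M ∈ md C x) {X : Set U} : x ∈ fL C X ↔ M ⊆ X := by
  rw [mem_fL_iff]
  constructor
  · rintro ⟨K, hK, hKX, hxK⟩
    exact (md_subset_of_mem hC hunary hM hK hxK).trans hKX
  · exact fun hMX => ⟨M, hM.1, hMX, hM.2.1⟩

lemma mem_fFix_iff_md_subset {C : Set (Set U)} (hC : C.Finite) (hunary : isUnary C) {x : U}
    {M : Set U} (hM : M ∈ md C x) {X : Set U} (hX : X ∈ fFix C) : x ∈ X ↔ M ⊆ X := by
  rw [← mem_fL_iff_md_subset hC hunary hM, show fL C X = X from hX]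

theorem stmt14_general [Fintype U] (C : Set (Set U))
    (hunary : isUnary C) :
    ∀ X ∈ fFix C, ∀ Y ∈ fFix C, ∀ Z ∈ fFix C,
      fL C (X ∩ (Y ∪ Z)) = fL C (X ∩ Y) ∪ fL C (X ∩ Z) := by
  intro X hX Y hY Z hZ
  refine Subset.antisymm (fun x hx => ?_) (union_subset
    (fL_mono C (inter_subset_inter_right X subset_union_left))
    (fL_mono C (inter_subset_inter_right X subset_union_right)))
  obtain ⟨M, hM, -⟩ := hunary x
  have hfix {A : Set U} (hA : A ∈ fFix C) : x ∈ A ↔ M ⊆ A :=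
    mem_fFix_iff_md_subset C.toFinite hunary hM hA
  simp only [mem_union, mem_fL_iff_md_subset C.toFinite hunary hM, subset_inter_iff]
  obtain ⟨hxX, hxY | hxZ⟩ := fL_subset C _ hx
  · exact Or.inl ⟨(hfix hX).1 hxX, (hfix hY).1 hxY⟩
  · exact Or.inr ⟨(hfix hX).1 hxX, (hfix hZ).1 hxZ⟩

/-- if `C` is unary then
`FL(X ∩ (Y ∪ Z)) = FL(X ∩ Y) ∪ FL(X ∩ Z)` for all `X, Y, Z ∈ F`, i.e. the
lattice `(F, ⊆)` (with join `∪` and meet `(X, Y) ↦ FL(X ∩ Y)`) is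
distributive. -/
theorem stmt14 [Fintype U] [Nonempty U] (C : Set (Set U))
    (hne : ∀ K ∈ C, K.Nonempty) (hcov : ⋃₀ C = Set.univ)
    (hunary : isUnary C) :
    ∀ X ∈ fFix C, ∀ Y ∈ fFix C, ∀ Z ∈ fFix C,
      fL C (X ∩ (Y ∪ Z)) = fL C (X ∩ Y) ∪ fL C (X ∩ Z) :=
  stmt14_general C hunary
end

section
/- Let C be a unary covering of a finite nonempty set U. For every X ∈ F, the set D = ⋃{K ∈ J(F) | K ∩ Xᶜ ≠ ∅} (the union of all join-irreducible elements of (F, ⊆) that contain at least one point of Xᶜ) is the dual pseudocomplement of X in the lattice (F, ⊆): D ∈ F, X ∪ D = U, and for every Y ∈ F with X ∪ Y = U one has D ⊆ Y. -/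
/-!
For a unary covering, the unique minimal description `K` of a point `x` is contained in every
fixed point containing `x`. Hence `(F, ⊆)` is closed under intersections, and every such `K` is
join-irreducible. Closure under intersections makes join-irreducibles join-prime: if
`K ⊆ X ∪ Y` then `K = (K ∩ X) ∪ (K ∩ Y)` forces `K ⊆ X` or `K ⊆ Y`. So a join-irreducible
meeting `Xᶜ` lies in every `Y` with `X ∪ Y = U`, while the minimal descriptions of the points
outside `X` already cover `Xᶜ`.
-/

open Set

variable {U : Type*}

variable {C : Set (Set U)}

theorem mem_fFix_iff {Z : Set U} : Z ∈ fFix C ↔ ∀ z ∈ Z, ∃ K ∈ C, z ∈ K ∧ K ⊆ Z := by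
  have hfL : fL C Z ⊆ Z := sUnion_subset fun K hK => hK.2
  refine ⟨fun hZ z hz => ?_, fun h => subset_antisymm hfL fun z hz => ?_⟩
  · rw [← show fL C Z = Z from hZ] at hz
    obtain ⟨K, ⟨hKC, hKZ⟩, hzK⟩ := hz
    exact ⟨K, hKC, hzK, hKZ⟩
  · obtain ⟨K, hKC, hzK, hKZ⟩ := h z hz
    exact ⟨K, ⟨hKC, hKZ⟩, hzK⟩

theorem mem_fFix_of_mem {K : Set U} (hK : K ∈ C) : K ∈ fFix C :=
  mem_fFix_iff.2 fun _ hz => ⟨K, hK, hz, subset_rfl⟩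

theorem sUnion_mem_fFix {S : Set (Set U)} (hS : ∀ A ∈ S, A ∈ fFix C) : ⋃₀ S ∈ fFix C := by
  refine mem_fFix_iff.2 fun z ⟨A, hA, hzA⟩ => ?_
  obtain ⟨K, hKC, hzK, hKA⟩ := mem_fFix_iff.1 (hS A hA) z hzA
  exact ⟨K, hKC, hzK, hKA.trans (subset_sUnion_of_mem hA)⟩

namespace isUnary

variable [Finite U] (hC : isUnary C) {K Z : Set U} {x : U}
include hC

theorem md_subset (hK : K ∈ md C x) {S : Set U} (hS : S ∈ C) (hxS : x ∈ S) : K ⊆ S := by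
  obtain ⟨M, hMS, hM⟩ :=
    exists_minimal_le_of_wellFoundedLT (fun T : Set U => T ∈ C ∧ x ∈ T) S ⟨hS, hxS⟩
  have hMmd : M ∈ md C x := ⟨hM.1.1, hM.1.2, fun T hT hxT hTM => hM.eq_of_subset ⟨hT, hxT⟩ hTM⟩
  rw [(hC x).unique hK hMmd]
  exact hMS

theorem md_subset_of_mem_fFix (hK : K ∈ md C x) (hZ : Z ∈ fFix C) (hxZ : x ∈ Z) : K ⊆ Z := by
  obtain ⟨S, hSC, hxS, hSZ⟩ := mem_fFix_iff.1 hZ x hxZ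
  exact (hC.md_subset hK hSC hxS).trans hSZ

theorem inter_mem_fFix (hK : K ∈ fFix C) (hZ : Z ∈ fFix C) : K ∩ Z ∈ fFix C := by
  refine mem_fFix_iff.2 fun z hz => ?_
  obtain ⟨M, hM⟩ := (hC z).exists
  exact ⟨M, hM.1, hM.2.1, subset_inter (hC.md_subset_of_mem_fFix hM hK hz.1)
    (hC.md_subset_of_mem_fFix hM hZ hz.2)⟩

theorem md_mem_jIrr (hK : K ∈ md C x) : K ∈ jIrr C := by
  refine ⟨mem_fFix_of_mem hK.1, fun A hA B hB hAB => ?_⟩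
  have hx : x ∈ A ∪ B := hAB ▸ hK.2.1
  rcases hx with hxA | hxB
  · exact .inl (subset_antisymm (hC.md_subset_of_mem_fFix hK hA hxA) (hAB ▸ subset_union_left))
  · exact .inr (subset_antisymm (hC.md_subset_of_mem_fFix hK hB hxB) (hAB ▸ subset_union_right))

theorem subset_or_subset_of_mem_jIrr (hK : K ∈ jIrr C) {X Y : Set U} (hX : X ∈ fFix C)
    (hY : Y ∈ fFix C) (hKXY : K ⊆ X ∪ Y) : K ⊆ X ∨ K ⊆ Y := by
  have hsplit : K = (K ∩ X) ∪ (K ∩ Y) := by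
    rw [← inter_union_distrib_left, inter_eq_left.2 hKXY]
  rcases hK.2 _ (hC.inter_mem_fFix hK.1 hX) _ (hC.inter_mem_fFix hK.1 hY) hsplit with h | h
  · exact .inl (inter_eq_left.1 h.symm)
  · exact .inr (inter_eq_left.1 h.symm)

end isUnary

theorem stmt17_general [Fintype U] (C : Set (Set U))
    (hunary : isUnary C) (X : Set U) (hX : X ∈ fFix C) :
    (⋃₀ {K | K ∈ jIrr C ∧ (K ∩ Xᶜ).Nonempty}) ∈ fFix C ∧
    X ∪ (⋃₀ {K | K ∈ jIrr C ∧ (K ∩ Xᶜ).Nonempty}) = Set.univ ∧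
    ∀ Y ∈ fFix C, X ∪ Y = Set.univ →
      (⋃₀ {K | K ∈ jIrr C ∧ (K ∩ Xᶜ).Nonempty}) ⊆ Y := by
  refine ⟨sUnion_mem_fFix fun K hK => hK.1.1, eq_univ_of_forall fun x => ?_, ?_⟩
  · by_cases hx : x ∈ X
    · exact .inl hx
    · obtain ⟨K, hK⟩ := (hunary x).exists
      exact .inr ⟨K, ⟨hunary.md_mem_jIrr hK, x, hK.2.1, hx⟩, hK.2.1⟩
  · refine fun Y hY hXY => sUnion_subset ?_
    rintro K ⟨hK, z, hzK, hzX⟩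
    have hKXY : K ⊆ X ∪ Y := hXY ▸ subset_univ K
    exact (hunary.subset_or_subset_of_mem_jIrr hK hX hY hKXY).resolve_left fun hKX => hzX (hKX hzK)

/-- if `C` is unary then, for every `X ∈ F`, the union
`D = ⋃{K ∈ J(F) | K ∩ Xᶜ ≠ ∅}` of all join-irreducible elements of `(F, ⊆)`
meeting `Xᶜ` is the dual pseudocomplement of `X` in the lattice `(F, ⊆)`. -/
theorem stmt17 [Fintype U] [Nonempty U] (C : Set (Set U))
    (hne : ∀ K ∈ C, K.Nonempty) (hcov : ⋃₀ C = Set.univ)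
    (hunary : isUnary C) (X : Set U) (hX : X ∈ fFix C) :
    (⋃₀ {K | K ∈ jIrr C ∧ (K ∩ Xᶜ).Nonempty}) ∈ fFix C ∧
    X ∪ (⋃₀ {K | K ∈ jIrr C ∧ (K ∩ Xᶜ).Nonempty}) = Set.univ ∧
    ∀ Y ∈ fFix C, X ∪ Y = Set.univ →
      (⋃₀ {K | K ∈ jIrr C ∧ (K ∩ Xᶜ).Nonempty}) ⊆ Y :=
  stmt17_general C hunary X hX
end
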